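/- Let G' be obtained from G by inserting a set S of new edges, and let Δ_I be the maximum number of edges of S incident to any single vertex. Then for every vertex v, core_{G'}(v) ≤ core_G(v) + Δ_I. -/

import Mathlib

open SimpleGraph

/-- The core number of a vertex: the largest `k` such that the vertex lies in a
subgraph of `G` with minimum degree at least `k`. -/
noncomputable def coreNumber {V : Type*} (G : SimpleGraph V) (v : V) : ℕ :=
  sSup {k : ℕ | ∃ H : G.Subgraph, v ∈ H.verts ∧ ∀ w ∈ H.verts, k ≤ (H.neighborSet w).ncard}

/-!
Take a subgraph `H` of `G ⊔ fromEdgeSet S` witnessing `core(v) ≥ k` and keep only its edges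
that lie in `G`. Each vertex loses at most `D` neighbours, those `b` with `s(w, b) ∈ S`, so the
result witnesses `core_G(v) ≥ k - D`.
-/

section

variable {V : Type*}

theorem Sym2.ncard_setOf_mk_mem_le [Finite V] (s : Set (Sym2 V)) (w : V) :
    {b | s(w, b) ∈ s}.ncard ≤ {e ∈ s | w ∈ e}.ncard :=
  Set.ncard_le_ncard_of_injOn (fun b => s(w, b)) (fun _ hb => ⟨hb, Sym2.mem_mk_left _ _⟩)
    fun _ _ _ _ h => Sym2.congr_right.mp h

theorem SimpleGraph.Subgraph.ncard_neighborSet_le_comap_ofLE_add [Finite V]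
    {G G' : SimpleGraph V} (hle : G ≤ G') (H : G'.Subgraph) (w : V) :
    (H.neighborSet w).ncard ≤ ((H.comap (Hom.ofLE hle)).neighborSet w).ncard +
      (G'.neighborSet w \ G.neighborSet w).ncard := by
  have hsub : H.neighborSet w ⊆
      (H.comap (Hom.ofLE hle)).neighborSet w ∪ (G'.neighborSet w \ G.neighborSet w) := by
    intro b (hb : H.Adj w b)
    by_cases hG : G.Adj w b
    · exact Or.inl ⟨hG, hb⟩
    · exact Or.inr ⟨H.adj_sub hb, hG⟩
  exact (Set.ncard_le_ncard hsub).trans (Set.ncard_union_le _ _)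

variable {G : SimpleGraph V} {v : V} {k : ℕ}

theorem le_coreNumber [Finite V] (H : G.Subgraph) (hv : v ∈ H.verts)
    (hk : ∀ w ∈ H.verts, k ≤ (H.neighborSet w).ncard) : k ≤ coreNumber G v := by
  refine le_csSup ⟨Nat.card V, ?_⟩ ⟨H, hv, hk⟩
  rintro j ⟨H', hv', hj⟩
  exact (hj v hv').trans (Set.ncard_le_card _)

theorem coreNumber_le {m : ℕ}
    (h : ∀ k (H : G.Subgraph), v ∈ H.verts → (∀ w ∈ H.verts, k ≤ (H.neighborSet w).ncard) →
      k ≤ m) :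
    coreNumber G v ≤ m :=
  csSup_le' fun k ⟨H, hv, hk⟩ => h k H hv hk

end

theorem coreNumber_insert_set_le_general {V : Type*} [Fintype V] (G : SimpleGraph V)
    (S : Set (Sym2 V)) (D : ℕ)
    (hD : ∀ v : V, {e ∈ S | v ∈ e}.ncard ≤ D) (v : V) :
    coreNumber (G ⊔ fromEdgeSet S) v ≤ coreNumber G v + D := by
  refine coreNumber_le fun k H hv hk => ?_
  have hlost (w : V) : ((G ⊔ fromEdgeSet S).neighborSet w \ G.neighborSet w).ncard ≤ D := by
    have hsub : (G ⊔ fromEdgeSet S).neighborSet w \ G.neighborSet w ⊆ {b | s(w, b) ∈ S} := by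
      rintro b ⟨hb | hb, hG⟩
      exacts [absurd hb hG, hb.1]
    exact (Set.ncard_le_ncard hsub).trans ((Sym2.ncard_setOf_mk_mem_le S w).trans (hD w))
  have hcore : k - D ≤ coreNumber G v := by
    refine le_coreNumber (H.comap (Hom.ofLE le_sup_left)) hv fun w hw => ?_
    have := H.ncard_neighborSet_le_comap_ofLE_add le_sup_left w
    have := hk w hw
    have := hlost w
    omega
  omega

theorem coreNumber_insert_set_le {V : Type*} [Fintype V] (G : SimpleGraph V)
    (S : Set (Sym2 V)) (hSE : ∀ e ∈ S, e ∉ G.edgeSet) (D : ℕ)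
    (hD : ∀ v : V, {e ∈ S | v ∈ e}.ncard ≤ D) (v : V) :
    coreNumber (G ⊔ fromEdgeSet S) v ≤ coreNumber G v + D :=
  coreNumber_insert_set_le_general G S D hD v
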